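/- Let T = (S, I, O, λ_S, s0) be a complete deterministic TFSM with timed guards, U = (R, I×𝕀_N, O, λ_R, r0) an untimed FSM, and N ≥ max(T). If there exists an 𝕀_N-bisimulation ∼ with s0 ∼ r0, then for every timed input word v = (i1,t1)(i2,t2)…(im,tm), Untime(B_T(v)) = B_U(𝕀_N(v)). -/

import Mathlib

open scoped Classical

namespace TFSMPaper

/-- A guard: an interval with integer (natural) endpoints; `hi = none` means `∞`;
`lclosed`/`rclosed` say whether the left/right delimiter is closed. -/
structure Guard where
  lo : ℕ
  hi : Option ℕ
  lclosed : Bool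
  rclosed : Bool
deriving DecidableEq

/-- Membership of a real clock value in a guard. -/
def Guard.mem (g : Guard) (x : ℝ) : Prop :=
  (if g.lclosed then (g.lo : ℝ) ≤ x else (g.lo : ℝ) < x) ∧
  (match g.hi with
    | none => True
    | some n => if g.rclosed then x ≤ (n : ℝ) else x < (n : ℝ))

/-- `J ⊆ g` as subsets of nonnegative reals. -/
def Guard.subset (J g : Guard) : Prop := ∀ x : ℝ, 0 ≤ x → J.mem x → g.mem x

/-- A guard is left-closed and right-open. -/
def Guard.LCRO (g : Guard) : Prop := g.lclosed = true ∧ g.rclosed = false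

/-- The point interval `[n,n]`. -/
def ptG (n : ℕ) : Guard := ⟨n, some n, true, true⟩

/-- The open interval `(n,n+1)`. -/
def opG (n : ℕ) : Guard := ⟨n, some (n + 1), false, false⟩

/-- The unbounded interval `(N,∞)`. -/
def infG (N : ℕ) : Guard := ⟨N, none, false, false⟩

/-- The set `𝕀_N` of abstract intervals. -/
def IN (N : ℕ) : Set Guard :=
  {g | (∃ n ≤ N, g = ptG n) ∨ (∃ n < N, g = opG n) ∨ g = infG N}

/-- All integer constants appearing in `g` are at most `N`. -/
def Guard.boundedBy (g : Guard) (N : ℕ) : Prop :=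
  g.lo ≤ N ∧ ∀ n, g.hi = some n → n ≤ N

/-- A timed word: strictly increasing, nonnegative timestamps. -/
def IsTimedWord {A : Type*} (v : List (A × ℝ)) : Prop :=
  v.Chain' (fun p q => p.2 < q.2) ∧ ∀ p ∈ v, (0 : ℝ) ≤ p.2

/-- Delete the timestamps of a timed word. -/
def untime {A : Type*} (v : List (A × ℝ)) : List A := v.map Prod.fst

/-! ### Untimed FSMs -/

/-- An untimed FSM with input alphabet `Γi`, output alphabet `Γo` and states `R`. -/
structure FSM (Γi Γo R : Type*) where
  trans : R → Γi → Γo → R → Prop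
  init : R

/-- `Run U r v w r'`: from state `r`, reading input word `v`, `U` can produce
output word `w` and reach `r'`. -/
inductive FSM.Run {Γi Γo R : Type*} (U : FSM Γi Γo R) : R → List Γi → List Γo → R → Prop
  | nil (r : R) : FSM.Run U r [] [] r
  | cons {r r' rf : R} {a : Γi} {b : Γo} {v : List Γi} {w : List Γo} :
      U.trans r a b r' → FSM.Run U r' v w rf → FSM.Run U r (a :: v) (b :: w) rf

/-- The behavior of `U`: `w ∈ B_U(v)`. -/
def FSM.Produces {Γi Γo R : Type*} (U : FSM Γi Γo R) (v : List Γi) (w : List Γo) : Prop :=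
  ∃ rf, U.Run U.init v w rf

def FSM.Complete {Γi Γo R : Type*} (U : FSM Γi Γo R) : Prop :=
  ∀ r a, ∃ b r', U.trans r a b r'

def FSM.Deterministic {Γi Γo R : Type*} (U : FSM Γi Γo R) : Prop :=
  ∀ r a b b' r' r'', U.trans r a b r' → U.trans r a b' r'' → b = b' ∧ r' = r''

/-! ### TFSMs with timed guards -/

/-- A TFSM with timed guards. -/
structure TFSMG (S I O : Type*) where
  trans : S → I → Guard → O → S → Prop
  init : S

/-- Input/output transition `(s,x) →(i,o) (s',0)`: some transition with a guard
containing the current clock value `x` fires. -/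
def TFSMG.IOTrans {S I O : Type*} (M : TFSMG S I O) (s : S) (x : ℝ) (i : I) (o : O)
    (s' : S) : Prop :=
  ∃ g, M.trans s i g o s' ∧ g.mem x

/-- `RunFrom M s t v w s'`: starting in state `s` (clock 0) at absolute time `t`,
reading the timed input word `v`, `M` produces the timed output word `w`
(outputs are instantaneous) and reaches `s'`. -/
inductive TFSMG.RunFrom {S I O : Type*} (M : TFSMG S I O) :
    S → ℝ → List (I × ℝ) → List (O × ℝ) → S → Prop
  | nil (s : S) (t : ℝ) : TFSMG.RunFrom M s t [] [] s
  | cons {s s' sf : S} {t t' : ℝ} {i : I} {o : O} {v : List (I × ℝ)} {w : List (O × ℝ)} :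
      M.IOTrans s (t' - t) i o s' → TFSMG.RunFrom M s' t' v w sf →
      TFSMG.RunFrom M s t ((i, t') :: v) ((o, t') :: w) sf

/-- The behavior of `M`: `w ∈ B_M(v)`. -/
def TFSMG.Produces {S I O : Type*} (M : TFSMG S I O) (v : List (I × ℝ))
    (w : List (O × ℝ)) : Prop :=
  ∃ sf, M.RunFrom M.init 0 v w sf

/-- Completeness: in every state, for every input and clock value, some transition fires. -/
def TFSMG.Complete {S I O : Type*} (M : TFSMG S I O) : Prop :=
  ∀ s i (x : ℝ), 0 ≤ x → ∃ g o s', M.trans s i g o s' ∧ g.mem x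

/-- Determinism: at most one input/output transition for each state, input and clock value. -/
def TFSMG.Deterministic {S I O : Type*} (M : TFSMG S I O) : Prop :=
  ∀ s i (x : ℝ) g g' o o' s' s'', M.trans s i g o s' → M.trans s i g' o' s'' →
    g.mem x → g'.mem x → o = o' ∧ s' = s''

/-- `N ≥ max(M)`: every integer constant in the guards of `M` is at most `N`. -/
def TFSMG.boundedBy {S I O : Type*} (M : TFSMG S I O) (N : ℕ) : Prop :=
  ∀ s i g o s', M.trans s i g o s' → g.boundedBy N

/-- The unique interval of `𝕀_N` containing the delay `t`. -/
noncomputable def INdur (N : ℕ) (t : ℝ) : Guard :=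
  if (N : ℝ) < t then infG N
  else if ∃ n : ℕ, (n : ℝ) = t then ptG ⌊t⌋₊
  else opG ⌊t⌋₊

/-- The `𝕀_N`-abstraction of a timed word (the extra `ℝ` argument is the previous
timestamp, initially `0`). -/
noncomputable def INabs {A : Type*} (N : ℕ) : ℝ → List (A × ℝ) → List (A × Guard)
  | _, [] => []
  | t, (a, t') :: v => (a, INdur N (t' - t)) :: INabs N t' v

/-- The abstract FSM `A^N_M` of a TFSM with timed guards. -/
def absFSMG {S I O : Type*} (N : ℕ) (M : TFSMG S I O) : FSM (I × Guard) O S where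
  trans s p o s' := p.2 ∈ IN N ∧ ∃ g, M.trans s p.1 g o s' ∧ p.2.subset g
  init := M.init

/-- `𝕀_N`-bisimulation between a TFSM with timed guards and an untimed FSM. -/
def INBisim {S I O R : Type*} (N : ℕ) (M : TFSMG S I O) (U : FSM (I × Guard) O R)
    (Rel : S → R → Prop) : Prop :=
  ∀ s r, Rel s r →
    (∀ i g o s', M.trans s i g o s' → ∀ J ∈ IN N, J.subset g →
        ∃ r', U.trans r (i, J) o r' ∧ Rel s' r') ∧
    (∀ i J o r', J ∈ IN N → U.trans r (i, J) o r' →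
        ∃ g s', M.trans s i g o s' ∧ J.subset g ∧ Rel s' r')

/-! ### TFSMs with timeouts -/

/-- A TFSM with timeouts; `timeout s = (s', none)` means timeout `∞`. -/
structure TFSMT (S I O : Type*) where
  trans : S → I → O → S → Prop
  init : S
  timeout : S → S × Option ℕ
  timeout_pos : ∀ s n, (timeout s).2 = some n → 0 < n

/-- The timed transition relation `(s,x) →t (s',x')`. -/
inductive TFSMT.Elapse {S I O : Type*} (M : TFSMT S I O) : S → ℝ → ℝ → S → ℝ → Prop
  | stay {s : S} {x t : ℝ} : 0 ≤ x → 0 ≤ t →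
      (∀ n, (M.timeout s).2 = some n → x + t < n) → TFSMT.Elapse M s x t s (x + t)
  | tmo {s : S} {x t : ℝ} {n : ℕ} : 0 ≤ x → 0 ≤ t → (M.timeout s).2 = some n →
      x + t = n → TFSMT.Elapse M s x t (M.timeout s).1 0
  | comp {s s' s'' : S} {x x' x'' t₁ t₂ : ℝ} :
      TFSMT.Elapse M s x t₁ s' x' → TFSMT.Elapse M s' x' t₂ s'' x'' →
      TFSMT.Elapse M s x (t₁ + t₂) s'' x''

/-- Input/output transition `(s,x) →(i,o) (s',0)`. -/
def TFSMT.IOTrans {S I O : Type*} (M : TFSMT S I O) (s : S) (x : ℝ) (i : I) (o : O)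
    (s' : S) : Prop :=
  M.trans s i o s' ∧ 0 ≤ x ∧ ∀ n, (M.timeout s).2 = some n → x < n

/-- Run of a TFSM with timeouts on a timed input word. -/
inductive TFSMT.RunFrom {S I O : Type*} (M : TFSMT S I O) :
    S → ℝ → List (I × ℝ) → List (O × ℝ) → S → Prop
  | nil (s : S) (t : ℝ) : TFSMT.RunFrom M s t [] [] s
  | cons {s s'' s' sf : S} {x t t' : ℝ} {i : I} {o : O} {v : List (I × ℝ)} {w : List (O × ℝ)} :
      M.Elapse s 0 (t' - t) s'' x → M.IOTrans s'' x i o s' →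
      TFSMT.RunFrom M s' t' v w sf →
      TFSMT.RunFrom M s t ((i, t') :: v) ((o, t') :: w) sf

/-- The behavior of `M`: `w ∈ B_M(v)`. -/
def TFSMT.Produces {S I O : Type*} (M : TFSMT S I O) (v : List (I × ℝ))
    (w : List (O × ℝ)) : Prop :=
  ∃ sf, M.RunFrom M.init 0 v w sf

def TFSMT.Complete {S I O : Type*} (M : TFSMT S I O) : Prop :=
  ∀ s i, ∃ o s', M.trans s i o s'

def TFSMT.Deterministic {S I O : Type*} (M : TFSMT S I O) : Prop :=
  ∀ s i o o' s' s'', M.trans s i o s' → M.trans s i o' s'' → o = o' ∧ s' = s''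

/-- The `𝟙`-abstraction of a timed word: `none` is the delay symbol `𝟙`
(the extra `ℝ` argument is the previous timestamp, initially `0`). -/
noncomputable def oneAbs {A : Type*} : ℝ → List (A × ℝ) → List (Option A)
  | _, [] => []
  | t, (a, t') :: v => List.replicate ⌊t' - t⌋₊ none ++ some a :: oneAbs t' v

/-- `𝟙`-bisimulation between a TFSM with timeouts and an untimed FSM
(`none` plays the role of `𝟙` in both alphabets). -/
def OneBisim {S I O R : Type*} (M : TFSMT S I O) (U : FSM (Option I) (Option O) R)
    (Rel : S → ℝ → R → Prop) : Prop :=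
  ∀ s x r, Rel s x r →
    (∀ t s' x', 0 ≤ t → ⌊x + t⌋₊ = ⌊x + 1⌋₊ → M.Elapse s x t s' x' →
        ∃ r', U.trans r none none r' ∧ Rel s' x' r') ∧
    (∀ r', U.trans r none none r' → ∀ t, 0 ≤ t → ⌊x + t⌋₊ = ⌊x + 1⌋₊ →
        ∃ s' x', M.Elapse s x t s' x' ∧ Rel s' x' r') ∧
    (∀ t i o s', 0 ≤ t → ⌊x⌋₊ = ⌊x + t⌋₊ → M.Elapse s x t s (x + t) →
        M.IOTrans s (x + t) i o s' → ∃ r', U.trans r (some i) (some o) r' ∧ Rel s' 0 r') ∧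
    (∀ i o r', U.trans r (some i) (some o) r' → ∀ t, 0 ≤ t → ⌊x⌋₊ = ⌊x + t⌋₊ →
        ∃ s', M.Elapse s x t s (x + t) ∧ M.IOTrans s (x + t) i o s' ∧ Rel s' 0 r')

/-- The `𝟙`-abstract FSM `A_M` of a TFSM with timeouts. -/
def oneAbsFSM {S I O : Type*} (M : TFSMT S I O) : FSM (Option I) (Option O) (S × ℕ) where
  trans p a b q :=
    (a = none ∧ b = none ∧
      ((q.1 = p.1 ∧ q.2 = p.2 + 1 ∧ ∃ m, (M.timeout p.1).2 = some m ∧ p.2 + 1 < m) ∨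
       (M.timeout p.1 = (q.1, some (p.2 + 1)) ∧ q.2 = 0) ∨
       (p.2 = 0 ∧ (M.timeout p.1).2 = none ∧ q = p))) ∨
    (∃ i o, a = some i ∧ b = some o ∧ M.trans p.1 i o q.1 ∧ q.2 = 0)
  init := (M.init, 0)

/-- One step of the timeout function (only from states with a finite timeout). -/
def TFSMT.TimeoutStep {S I O : Type*} (M : TFSMT S I O) (s s' : S) : Prop :=
  (M.timeout s).2 ≠ none ∧ s' = (M.timeout s).1

/-- No cycles of timeout transitions. -/
def TFSMT.LoopFree {S I O : Type*} (M : TFSMT S I O) : Prop :=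
  ∀ s, ¬ Relation.TransGen M.TimeoutStep s s

/-! ### TFSMs with timed guards and timeouts -/

/-- A TFSM with both timed guards and timeouts. -/
structure TFSMGT (S I O : Type*) where
  trans : S → I → Guard → O → S → Prop
  init : S
  timeout : S → S × Option ℕ

/-- The timed transition relation `(s,x) →t (s',x')`. -/
inductive TFSMGT.Elapse {S I O : Type*} (M : TFSMGT S I O) : S → ℝ → ℝ → S → ℝ → Prop
  | stay {s : S} {x t : ℝ} : 0 ≤ x → 0 ≤ t →
      (∀ n, (M.timeout s).2 = some n → x + t < n) → TFSMGT.Elapse M s x t s (x + t)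
  | tmo {s : S} {x t : ℝ} {n : ℕ} : 0 ≤ x → 0 ≤ t → (M.timeout s).2 = some n →
      x + t = n → TFSMGT.Elapse M s x t (M.timeout s).1 0
  | comp {s s' s'' : S} {x x' x'' t₁ t₂ : ℝ} :
      TFSMGT.Elapse M s x t₁ s' x' → TFSMGT.Elapse M s' x' t₂ s'' x'' →
      TFSMGT.Elapse M s x (t₁ + t₂) s'' x''

/-- Input/output transition `(s,x) →(i,o) (s',0)`. -/
def TFSMGT.IOTrans {S I O : Type*} (M : TFSMGT S I O) (s : S) (x : ℝ) (i : I) (o : O)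
    (s' : S) : Prop :=
  (∃ g, M.trans s i g o s' ∧ g.mem x) ∧ 0 ≤ x ∧ ∀ n, (M.timeout s).2 = some n → x < n

/-- Run of a TFSM with timed guards and timeouts on a timed input word. -/
inductive TFSMGT.RunFrom {S I O : Type*} (M : TFSMGT S I O) :
    S → ℝ → List (I × ℝ) → List (O × ℝ) → S → Prop
  | nil (s : S) (t : ℝ) : TFSMGT.RunFrom M s t [] [] s
  | cons {s s'' s' sf : S} {x t t' : ℝ} {i : I} {o : O} {v : List (I × ℝ)} {w : List (O × ℝ)} :
      M.Elapse s 0 (t' - t) s'' x → M.IOTrans s'' x i o s' →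
      TFSMGT.RunFrom M s' t' v w sf →
      TFSMGT.RunFrom M s t ((i, t') :: v) ((o, t') :: w) sf

def TFSMGT.Produces {S I O : Type*} (M : TFSMGT S I O) (v : List (I × ℝ))
    (w : List (O × ℝ)) : Prop :=
  ∃ sf, M.RunFrom M.init 0 v w sf

def TFSMGT.Complete {S I O : Type*} (M : TFSMGT S I O) : Prop :=
  ∀ s i (x : ℝ), 0 ≤ x → (∀ n, (M.timeout s).2 = some n → x < n) →
    ∃ g o s', M.trans s i g o s' ∧ g.mem x

def TFSMGT.Deterministic {S I O : Type*} (M : TFSMGT S I O) : Prop :=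
  ∀ s i (x : ℝ) g g' o o' s' s'', M.trans s i g o s' → M.trans s i g' o' s'' →
    g.mem x → g'.mem x → o = o' ∧ s' = s''

/-- `N ≥ max(M)`: all guard constants and all finite timeouts of `M` are at most `N`. -/
def TFSMGT.boundedBy {S I O : Type*} (M : TFSMGT S I O) (N : ℕ) : Prop :=
  (∀ s i g o s', M.trans s i g o s' → g.boundedBy N) ∧
  (∀ s m, (M.timeout s).2 = some m → m ≤ N)

/-- `N = max(M)`: `N` is the greatest integer constant appearing in `M`. -/
def TFSMGT.maxConst {S I O : Type*} (M : TFSMGT S I O) (N : ℕ) : Prop :=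
  M.boundedBy N ∧ ∀ N', M.boundedBy N' → N ≤ N'

/-- Number of `𝕥` symbols abstracting a delay `t`. -/
noncomputable def tNum (t : ℝ) : ℕ :=
  if ∃ n : ℕ, (n : ℝ) = t then 2 * ⌊t⌋₊ else 2 * ⌊t⌋₊ + 1

/-- The `𝕥`-abstraction of a timed word: `none` is the delay symbol `𝕥`
(the extra `ℝ` argument is the previous timestamp, initially `0`). -/
noncomputable def tAbs {A : Type*} : ℝ → List (A × ℝ) → List (Option A)
  | _, [] => []
  | t, (a, t') :: v => List.replicate (tNum (t' - t)) none ++ some a :: tAbs t' v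

/-- `𝕥`-bisimulation between a TFSM with timed guards and timeouts and an untimed FSM. -/
def TBisim {S I O R : Type*} (M : TFSMGT S I O) (U : FSM (Option I) (Option O) R)
    (Rel : S → ℝ → R → Prop) : Prop :=
  ∀ s x r, Rel s x r →
    (∀ t s' x', 0 < t → t < 1 → ((∃ n : ℕ, (n : ℝ) = x) ∨ ∃ n : ℕ, (n : ℝ) = x + t) →
        M.Elapse s x t s' x' → ∃ r', U.trans r none none r' ∧ Rel s' x' r') ∧
    (∀ r', U.trans r none none r' →
        ∀ t, 0 < t → t < 1 → ((∃ n : ℕ, (n : ℝ) = x) ∨ ∃ n : ℕ, (n : ℝ) = x + t) →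
        ∃ s' x', M.Elapse s x t s' x' ∧ Rel s' x' r') ∧
    (∀ i o s', M.IOTrans s x i o s' → ∃ r', U.trans r (some i) (some o) r' ∧ Rel s' 0 r') ∧
    (∀ i o r', U.trans r (some i) (some o) r' →
        ∃ s', M.IOTrans s x i o s' ∧ Rel s' 0 r')

/-- The `𝕥`-abstract FSM `A_M` of a TFSM with timed guards and timeouts. -/
def tAbsFSM {S I O : Type*} (N : ℕ) (M : TFSMGT S I O) :
    FSM (Option I) (Option O) (S × Guard) where
  trans p a b q :=
    (a = none ∧ b = none ∧
      ((∃ n, p.2 = ptG n ∧ q = (p.1, opG n) ∧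
          ∀ m, (M.timeout p.1).2 = some m → n + 1 ≤ m) ∨
       (∃ n, p.2 = opG n ∧ q = (p.1, ptG (n + 1)) ∧
          ∀ m, (M.timeout p.1).2 = some m → n + 1 < m) ∨
       (∃ n, p.2 = opG n ∧ M.timeout p.1 = (q.1, some (n + 1)) ∧ q.2 = ptG 0) ∨
       (p.2 = infG N ∧ (M.timeout p.1).2 = none ∧ q = p))) ∨
    (∃ i o, a = some i ∧ b = some o ∧ q.2 = ptG 0 ∧
      ∃ g, M.trans p.1 i g o q.1 ∧ p.2.subset g)
  init := (M.init, ptG 0)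


/-!
A guard whose constants are at most `N` is a union of intervals of `𝕀_N`: the interval of `𝕀_N`
containing a delay lies inside every such guard that contains the delay. Hence, along a run of `T`,
every transition taken at a delay `d` has a counterpart in `U` labelled by the interval of `d`, and
conversely every transition of `U` on that interval comes from a transition of `T` enabled at `d`,
which by determinism of `T` is the one the run takes. Induction on the run gives both inclusions.
-/

namespace Guard

lemma lo_le_of_mem {g : Guard} {x : ℝ} (h : g.mem x) : (g.lo : ℝ) ≤ x := by
  have h₁ := h.1
  split_ifs at h₁ <;> linarith

lemma nonneg_of_mem {g : Guard} {x : ℝ} (h : g.mem x) : 0 ≤ x :=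
  (Nat.cast_nonneg _).trans (lo_le_of_mem h)

lemma le_hi_of_mem {g : Guard} {x : ℝ} {m : ℕ} (h : g.mem x) (hm : g.hi = some m) :
    x ≤ m := by
  have h₂ := h.2
  simp only [hm] at h₂
  split_ifs at h₂ <;> linarith

lemma mem_of_lo_lt_of_lt_hi {g : Guard} {y : ℝ} (hlo : (g.lo : ℝ) < y)
    (hhi : ∀ m, g.hi = some m → y < m) : g.mem y := by
  refine ⟨by split_ifs <;> linarith, ?_⟩
  rcases hg : g.hi with _ | m
  · trivial
  · have := hhi m hg
    split_ifs <;> linarith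

end Guard

open Guard

@[simp] lemma mem_ptG {n : ℕ} {x : ℝ} : (ptG n).mem x ↔ x = n := by
  simp only [Guard.mem, ptG, if_true]
  exact ⟨fun h => le_antisymm h.2 h.1, fun h => ⟨h.ge, h.le⟩⟩

@[simp] lemma mem_opG {n : ℕ} {x : ℝ} : (opG n).mem x ↔ (n : ℝ) < x ∧ x < n + 1 := by
  simp [Guard.mem, opG]

@[simp] lemma mem_infG {N : ℕ} {x : ℝ} : (infG N).mem x ↔ (N : ℝ) < x := by
  simp [Guard.mem, infG]

lemma ptG_subset_of_mem {g : Guard} {n : ℕ} (h : g.mem n) : (ptG n).subset g := by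
  intro y _ hy
  rwa [mem_ptG.1 hy]

lemma opG_subset_of_mem {g : Guard} {n : ℕ} {x : ℝ} (hx : (opG n).mem x) (h : g.mem x) :
    (opG n).subset g := by
  rw [mem_opG] at hx
  intro y _ hy
  rw [mem_opG] at hy
  refine mem_of_lo_lt_of_lt_hi ?_ fun m hm => ?_
  · have : g.lo < n + 1 := by exact_mod_cast (lo_le_of_mem h).trans_lt hx.2
    have : (g.lo : ℝ) ≤ n := by exact_mod_cast Nat.lt_succ_iff.1 this
    linarith
  · have : n < m := by exact_mod_cast hx.1.trans_le (le_hi_of_mem h hm)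
    have : (n : ℝ) + 1 ≤ m := by exact_mod_cast this
    linarith

lemma infG_subset_of_mem {g : Guard} {N : ℕ} (hg : g.boundedBy N) {x : ℝ} (hx : (N : ℝ) < x)
    (h : g.mem x) : (infG N).subset g := by
  intro y _ hy
  rw [mem_infG] at hy
  refine mem_of_lo_lt_of_lt_hi ((Nat.cast_le.2 hg.1).trans_lt hy) fun m hm => ?_
  have : (m : ℝ) ≤ N := by exact_mod_cast hg.2 m hm
  linarith [le_hi_of_mem h hm]

lemma INdur_cases (N : ℕ) {x : ℝ} (hx : 0 ≤ x) :
    (INdur N x = infG N ∧ (N : ℝ) < x) ∨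
    (∃ n ≤ N, INdur N x = ptG n ∧ x = n) ∨
    (∃ n < N, INdur N x = opG n ∧ (n : ℝ) < x ∧ x < n + 1) := by
  unfold INdur
  split_ifs with hN hint
  · exact Or.inl ⟨rfl, hN⟩
  · obtain ⟨n, rfl⟩ := hint
    refine Or.inr (Or.inl ⟨n, ?_, by rw [Nat.floor_natCast], rfl⟩)
    exact_mod_cast not_lt.1 hN
  · have hfloor : (⌊x⌋₊ : ℝ) < x := (Nat.floor_le hx).lt_of_ne fun h => hint ⟨_, h⟩
    have hxN : x < N := (not_lt.1 hN).lt_of_ne fun h => hint ⟨_, h.symm⟩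
    refine Or.inr (Or.inr ⟨⌊x⌋₊, ?_, rfl, hfloor, Nat.lt_floor_add_one x⟩)
    exact_mod_cast hfloor.trans hxN

lemma INdur_mem_IN (N : ℕ) {x : ℝ} (hx : 0 ≤ x) : INdur N x ∈ IN N := by
  rcases INdur_cases N hx with ⟨h, -⟩ | ⟨n, hn, h, -⟩ | ⟨n, hn, h, -⟩
  exacts [Or.inr (Or.inr h), Or.inl ⟨n, hn, h⟩, Or.inr (Or.inl ⟨n, hn, h⟩)]

lemma mem_INdur (N : ℕ) {x : ℝ} (hx : 0 ≤ x) : (INdur N x).mem x := by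
  rcases INdur_cases N hx with ⟨h, hx'⟩ | ⟨n, -, h, hx'⟩ | ⟨n, -, h, hx'⟩ <;>
    rw [h] <;> simp [hx']

lemma INdur_subset_of_mem {N : ℕ} {g : Guard} (hg : g.boundedBy N) {x : ℝ} (h : g.mem x) :
    (INdur N x).subset g := by
  rcases INdur_cases N (nonneg_of_mem h) with ⟨hd, hx⟩ | ⟨n, -, hd, rfl⟩ | ⟨n, -, hd, hx⟩
  · exact hd ▸ infG_subset_of_mem hg hx h
  · exact hd ▸ ptG_subset_of_mem h
  · exact hd ▸ opG_subset_of_mem (mem_opG.2 hx) h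

section Simulation

variable {S R I O : Type} {T : TFSMG S I O} {U : FSM (I × Guard) O R} {N : ℕ}
  {Rel : S → R → Prop}

lemma INBisim.exists_run (hN : T.boundedBy N) (hB : INBisim N T U Rel) {s : S} {t : ℝ}
    {v : List (I × ℝ)} {w : List (O × ℝ)} {sf : S} (hrun : T.RunFrom s t v w sf) {r : R}
    (hr : Rel s r) : ∃ rf, U.Run r (INabs N t v) (untime w) rf := by
  induction hrun generalizing r with
  | nil => exact ⟨r, .nil r⟩
  | cons hio _ ih =>
    obtain ⟨g, hg, hmem⟩ := hio
    obtain ⟨r', hu, hr'⟩ := (hB _ _ hr).1 _ _ _ _ hg _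
      (INdur_mem_IN N (nonneg_of_mem hmem)) (INdur_subset_of_mem (hN _ _ _ _ _ hg) hmem)
    obtain ⟨rf, hrf⟩ := ih hr'
    exact ⟨rf, .cons hu hrf⟩

lemma INBisim.eq_untime_of_run (hD : T.Deterministic) (hB : INBisim N T U Rel) {s : S}
    {t : ℝ} {v : List (I × ℝ)} {w : List (O × ℝ)} {sf : S} (hrun : T.RunFrom s t v w sf)
    {r : R} (hr : Rel s r) {u : List O} {rf : R} (hu : U.Run r (INabs N t v) u rf) :
    u = untime w := by
  induction hrun generalizing r u with
  | nil => cases hu; rfl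
  | cons hio _ ih =>
    obtain ⟨g, hg, hmem⟩ := hio
    have hd := nonneg_of_mem hmem
    rw [INabs] at hu
    cases hu with
    | cons hstep hrest =>
      obtain ⟨g', s', hg', hsub, hr'⟩ := (hB _ _ hr).2 _ _ _ _ (INdur_mem_IN N hd) hstep
      obtain ⟨rfl, rfl⟩ := hD _ _ _ _ _ _ _ _ _ hg hg' hmem (hsub _ hd (mem_INdur N hd))
      rw [ih hr' hrest]
      rfl

end Simulation

theorem statement0_general {S R I O : Type} (T : TFSMG S I O)
    (U : FSM (I × Guard) O R) (N : ℕ) (hN : T.boundedBy N)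
    (hD : T.Deterministic)
    (Rel : S → R → Prop) (hB : INBisim N T U Rel) (h0 : Rel T.init U.init) :
    ∀ (v : List (I × ℝ)) (w : List (O × ℝ)), IsTimedWord v → T.Produces v w →
      ∀ u : List O, U.Produces (INabs N 0 v) u ↔ u = untime w := by
  rintro v w - ⟨sf, hrun⟩ u
  constructor
  · rintro ⟨rf, hu⟩
    exact hB.eq_untime_of_run hD hrun h0 hu
  · rintro rfl
    exact hB.exists_run hN hrun h0

/-- If a complete deterministic TFSM with timed guards `T` and an
untimed FSM `U` are related by an `𝕀_N`-bisimulation relating the initial states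
(with `N ≥ max(T)`), then for every timed input word `v`,
`Untime (B_T v) = B_U (𝕀_N v)`. -/
theorem statement0 {S R I O : Type} [Finite S] (T : TFSMG S I O)
    (U : FSM (I × Guard) O R) (N : ℕ) (hN : T.boundedBy N)
    (hC : T.Complete) (hD : T.Deterministic)
    (Rel : S → R → Prop) (hB : INBisim N T U Rel) (h0 : Rel T.init U.init) :
    ∀ (v : List (I × ℝ)) (w : List (O × ℝ)), IsTimedWord v → T.Produces v w →
      ∀ u : List O, U.Produces (INabs N 0 v) u ↔ u = untime w :=
  statement0_general T U N hN hD Rel hB h0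

end TFSMPaper
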